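/- Let λ, ν ∈ ℂ with a := ν − λ ∈ ℕ, let N ∈ ℕ and m ∈ ℤ with m ≥ N, and let g_k ∈ Pol_{a−k}[t]_even for k = m−N,…,m+N (with g_{m−N−1} := 0 and g_{m+N+1} := 0). Then for each k = m−N,…,m+N, with s := k−m+N, the following identity of polynomials in ℂ[ζ₁,ζ₂,ζ₃] holds: (ζ₁+iζ₂)·M_s(ψ(g)) = (ζ₁+iζ₂)^k·[ ζ₁²·T_{a−k−2}(S_{a−k}^{λ−1}g_k + (N−k+m)·g_{k+1}′) + ζ₂²·T_{a−k−2}(2(m−k)(a−k−ϑ_t)g_k − (N−k+m)·g_{k+1}′) + ζ₁ζ₂·T_{a−k−2}(i·S_{a−k}^{λ−1}g_k + 2i(k−m)(a−k−ϑ_t)g_k + 2i(N−k+m)·g_{k+1}′) + T_{a−k}(2k(λ+a−1+m−k)g_k − (N+k−m)·g_{k−1}′) ]. (This is the paper's formula for M_s(ψ), multiplied on both sides by ζ₁+iζ₂; all arguments of T lie in the even polynomial spaces of the indicated degrees.) -/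
import Mathlib


noncomputable section

/-- `Pol_ℓ[t]_even`: the span of the monomials `t^(ℓ-2b)`; zero subspace for `ℓ < 0`. -/
def PolEven (l : ℤ) : Submodule ℂ (Polynomial ℂ) :=
  Submodule.span ℂ
    {p : Polynomial ℂ | ∃ b : ℕ, 2 * (b : ℤ) ≤ l ∧ p = Polynomial.X ^ (l - 2 * b).toNat}

/-- The map `T_ℓ`, sending `Σ c_b t^(ℓ-2b)` to `Σ c_b (ζ₁²+ζ₂²)^b ζ₃^(ℓ-2b)`
(zero for `ℓ < 0`). -/
def Tmap (l : ℤ) (g : Polynomial ℂ) : MvPolynomial (Fin 3) ℂ :=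
  if l < 0 then 0 else
    ∑ b ∈ Finset.range (l.toNat / 2 + 1),
      MvPolynomial.C (g.coeff (l.toNat - 2 * b)) *
        (MvPolynomial.X 0 ^ 2 + MvPolynomial.X 1 ^ 2) ^ b *
        MvPolynomial.X 2 ^ (l.toNat - 2 * b)

/-- The imaginary Gegenbauer operator `S_ℓ^μ` on `ℂ[t]`. -/
def Sop (μ : ℂ) (l : ℤ) (f : Polynomial ℂ) : Polynomial ℂ :=
  -((1 + Polynomial.X ^ 2) * f.derivative.derivative)
    - Polynomial.C (1 + 2 * μ) * (Polynomial.X * f.derivative)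
    + Polynomial.C ((l : ℂ) * ((l : ℂ) + 2 * μ)) * f

/-- The operator `M_s` (the F-system equation for `C₁⁺`), acting on a `ℤ`-indexed
tuple of polynomials in `ℂ[ζ₁,ζ₂,ζ₃]`. -/
def Mop (lam : ℂ) (N : ℕ) (φ : ℤ → MvPolynomial (Fin 3) ℂ) (s : ℤ) :
    MvPolynomial (Fin 3) ℂ :=
  MvPolynomial.C (2 * lam) * MvPolynomial.pderiv 0 (φ s)
    + 2 * (MvPolynomial.X 0 * MvPolynomial.pderiv 0 (MvPolynomial.pderiv 0 (φ s))
        + MvPolynomial.X 1 * MvPolynomial.pderiv 1 (MvPolynomial.pderiv 0 (φ s))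
        + MvPolynomial.X 2 * MvPolynomial.pderiv 2 (MvPolynomial.pderiv 0 (φ s)))
    - MvPolynomial.X 0 * (MvPolynomial.pderiv 0 (MvPolynomial.pderiv 0 (φ s))
        + MvPolynomial.pderiv 1 (MvPolynomial.pderiv 1 (φ s))
        + MvPolynomial.pderiv 2 (MvPolynomial.pderiv 2 (φ s)))
    - MvPolynomial.C ((s : ℂ)) * MvPolynomial.pderiv 2 (φ (s - 1))
    + MvPolynomial.C (2 * Complex.I * ((s : ℂ) - (N : ℂ))) * MvPolynomial.pderiv 1 (φ s)
    + MvPolynomial.C (2 * (N : ℂ) - (s : ℂ)) * MvPolynomial.pderiv 2 (φ (s + 1))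

/-- The tuple `ψ(g)` with components `ψ_{k-m+N} = (T_{a-k} g_k)·(ζ₁+iζ₂)^k`,
`k = m-N,…,m+N` (zero outside `0,…,2N`). -/
def psiTuple (a : ℤ) (N : ℕ) (m : ℤ) (g : ℤ → Polynomial ℂ) :
    ℤ → MvPolynomial (Fin 3) ℂ := fun s =>
  if 0 ≤ s ∧ s ≤ 2 * (N : ℤ) then
    Tmap (a - (s + m - N)) (g (s + m - N)) *
      (MvPolynomial.X 0 + MvPolynomial.C Complex.I * MvPolynomial.X 1) ^ (s + m - N).toNat
  else 0

section Helpers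
open MvPolynomial

lemma Tmap_zero (l : ℤ) : Tmap l 0 = 0 := by
  unfold Tmap; split <;> simp

lemma Tmap_add (l : ℤ) (p q : Polynomial ℂ) : Tmap l (p + q) = Tmap l p + Tmap l q := by
  unfold Tmap; split
  · simp
  · rw [← Finset.sum_add_distrib]
    refine Finset.sum_congr rfl fun b _ => ?_
    simp [Polynomial.coeff_add, map_add]; ring

lemma Tmap_Cmul (l : ℤ) (c : ℂ) (p : Polynomial ℂ) :
    Tmap l (Polynomial.C c * p) = MvPolynomial.C c * Tmap l p := by
  unfold Tmap; split
  · simp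
  · rw [Finset.mul_sum]
    refine Finset.sum_congr rfl fun b _ => ?_
    simp [Polynomial.coeff_C_mul, map_mul]; ring

lemma Tmap_sub (l : ℤ) (p q : Polynomial ℂ) : Tmap l (p - q) = Tmap l p - Tmap l q := by
  have := Tmap_add l (p - q) q; simp at this; rw [this]; ring

lemma Tmap_smul (l : ℤ) (c : ℂ) (p : Polynomial ℂ) :
    Tmap l (c • p) = MvPolynomial.C c * Tmap l p := by
  rw [← Tmap_Cmul]; congr 1; exact Polynomial.smul_eq_C_mul c

lemma Tmap_neg_deg (l : ℤ) (hl : l < 0) (p : Polynomial ℂ) : Tmap l p = 0 := by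
  unfold Tmap; simp [hl]


lemma Tmap_monomial (b n : ℕ) :
    Tmap ((n + 2*b : ℕ) : ℤ) (Polynomial.X ^ n) =
      (X 0 ^ 2 + X 1 ^ 2) ^ b * X 2 ^ n := by
  unfold Tmap
  rw [if_neg (by omega)]
  have hto : ((n + 2*b : ℕ) : ℤ).toNat = n + 2*b := by omega
  rw [hto]
  rw [Finset.sum_eq_single b]
  · simp [Polynomial.coeff_X_pow, show n + 2*b - 2*b = n by omega]
  · intro c hcm hc
    have : c < (n + 2*b)/2 + 1 := Finset.mem_range.mp hcm
    rw [Polynomial.coeff_X_pow, if_neg (by omega), map_zero, zero_mul, zero_mul]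
  · intro h; exfalso; apply h; simp [Finset.mem_range]; omega

lemma Tmap_X_pow_high (l : ℤ) (d : ℕ) (hd : l < d) (c : ℂ) :
    Tmap l (Polynomial.C c * Polynomial.X ^ d) = 0 := by
  unfold Tmap; split
  · rfl
  · apply Finset.sum_eq_zero; intro b _
    rw [Polynomial.coeff_C_mul, Polynomial.coeff_X_pow, if_neg (by omega), mul_zero, map_zero,
      zero_mul, zero_mul]

-- derivative commutation
lemma pd2_term (c : ℂ) (b e : ℕ) :
    pderiv 2 (MvPolynomial.C c * (X 0^2 + X 1^2)^b * X 2 ^ e : MvPolynomial (Fin 3) ℂ) =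
      (e : MvPolynomial (Fin 3) ℂ) * (MvPolynomial.C c * (X 0^2+X 1^2)^b * X 2 ^ (e-1)) := by
  have h0 : pderiv 2 (X 0 : MvPolynomial (Fin 3) ℂ) = 0 := pderiv_X_of_ne (by decide)
  have h1 : pderiv 2 (X 1 : MvPolynomial (Fin 3) ℂ) = 0 := pderiv_X_of_ne (by decide)
  simp [pderiv_mul, pderiv_pow, pderiv_C, h0, h1, pderiv_X_self]
  ring

lemma Tmap_deriv (l : ℤ) (p : Polynomial ℂ) :
    pderiv 2 (Tmap l p) = Tmap (l - 1) (Polynomial.derivative p) := by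
  rcases lt_trichotomy l 0 with hl | hl | hl
  · rw [Tmap_neg_deg l hl, Tmap_neg_deg _ (by omega), map_zero]
  · subst hl
    have hneg : (0:ℤ) - 1 < 0 := by norm_num
    rw [Tmap_neg_deg _ hneg]
    unfold Tmap
    rw [if_neg (by norm_num)]
    simp [pd2_term]
  · -- l ≥ 1
    obtain ⟨L, hL⟩ : ∃ L : ℕ, l = (L : ℤ) + 1 := ⟨(l-1).toNat, by omega⟩
    subst hL
    unfold Tmap
    rw [if_neg (by omega), if_neg (by omega)]
    have h1 : ((L:ℤ) + 1).toNat = L + 1 := by omega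
    have h2 : ((L:ℤ) + 1 - 1).toNat = L := by omega
    rw [h1, h2, map_sum]
    rcases Nat.even_or_odd L with ⟨c, hc⟩ | ⟨c, hc⟩
    · -- L = 2c even : (L+1)/2 = c = L/2
      have r1 : (L+1)/2 + 1 = c + 1 := by omega
      have r2 : L/2 + 1 = c + 1 := by omega
      rw [r1, r2]
      refine Finset.sum_congr rfl fun b hb => ?_
      have hb' : b < c + 1 := Finset.mem_range.mp hb
      rw [pd2_term]
      rw [Polynomial.coeff_derivative]
      have e1 : L + 1 - 2*b = (L - 2*b) + 1 := by omega
      rw [e1]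
      simp only [map_mul, map_add, map_one, map_natCast]
      push_cast
      ring
    · -- L odd = 2c+1 : (L+1)/2 = c+1, L/2 = c
      have r1 : (L+1)/2 + 1 = c + 2 := by omega
      have r2 : L/2 + 1 = c + 1 := by omega
      rw [r1, r2, Finset.sum_range_succ]
      have hlast : L + 1 - 2*(c+1) = 0 := by omega
      rw [hlast]
      rw [pd2_term]
      simp only [Nat.cast_zero, zero_mul, add_zero]
      refine Finset.sum_congr rfl fun b hb => ?_
      have hb' : b < c + 1 := Finset.mem_range.mp hb
      rw [pd2_term, Polynomial.coeff_derivative]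
      have e1 : L + 1 - 2*b = (L - 2*b) + 1 := by omega
      rw [e1]
      simp only [map_mul, map_add, map_one, map_natCast]
      push_cast
      ring

abbrev MvP := MvPolynomial (Fin 3) ℂ

def ww : MvP := X 0 + C Complex.I * X 1
def uu : MvP := X 0 - C Complex.I * X 1
def Mn (α β γ : ℕ) : MvP := ww ^ α * uu ^ β * X 2 ^ γ

lemma hI : (C Complex.I : MvP) * C Complex.I = -1 := by
  rw [← map_mul, Complex.I_mul_I, map_neg, map_one]

lemma pd0_ww : pderiv 0 ww = 1 := by
  simp [ww, pderiv_X_self, pderiv_X_of_ne (show (1:Fin 3) ≠ 0 by decide)]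
lemma pd1_ww : pderiv 1 ww = C Complex.I := by
  simp [ww, pderiv_X_self, pderiv_X_of_ne (show (0:Fin 3) ≠ 1 by decide)]
lemma pd2_ww : pderiv 2 ww = 0 := by
  simp [ww, pderiv_X_of_ne (show (0:Fin 3) ≠ 2 by decide),
    pderiv_X_of_ne (show (1:Fin 3) ≠ 2 by decide)]
lemma pd0_uu : pderiv 0 uu = 1 := by
  simp [uu, pderiv_X_self, pderiv_X_of_ne (show (1:Fin 3) ≠ 0 by decide)]
lemma pd1_uu : pderiv 1 uu = - C Complex.I := by
  simp [uu, pderiv_X_self, pderiv_X_of_ne (show (0:Fin 3) ≠ 1 by decide)]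
lemma pd2_uu : pderiv 2 uu = 0 := by
  simp [uu, pderiv_X_of_ne (show (0:Fin 3) ≠ 2 by decide),
    pderiv_X_of_ne (show (1:Fin 3) ≠ 2 by decide)]
lemma pd0_z : pderiv 0 (X 2 : MvP) = 0 := pderiv_X_of_ne (by decide)
lemma pd1_z : pderiv 1 (X 2 : MvP) = 0 := pderiv_X_of_ne (by decide)
lemma pd2_z : pderiv 2 (X 2 : MvP) = 1 := pderiv_X_self 2

lemma d0M (α β γ : ℕ) : pderiv 0 (Mn α β γ) =
    C (α : ℂ) * Mn (α-1) β γ + C (β : ℂ) * Mn α (β-1) γ := by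
  simp [Mn, pderiv_mul, pderiv_pow, pd0_ww, pd0_uu, pd0_z, map_natCast]
  ring

lemma d1M (α β γ : ℕ) : pderiv 1 (Mn α β γ) =
    C Complex.I * (C (α : ℂ) * Mn (α-1) β γ - C (β : ℂ) * Mn α (β-1) γ) := by
  simp [Mn, pderiv_mul, pderiv_pow, pd1_ww, pd1_uu, pd1_z, map_natCast]
  ring

lemma d2M (α β γ : ℕ) : pderiv 2 (Mn α β γ) = C (γ : ℂ) * Mn α β (γ-1) := by
  simp [Mn, pderiv_mul, pderiv_pow, pd2_ww, pd2_uu, pd2_z, map_natCast]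
  ring

lemma eulM (α β γ : ℕ) :
    X 0 * pderiv 0 (Mn α β γ) + X 1 * pderiv 1 (Mn α β γ) + X 2 * pderiv 2 (Mn α β γ) =
      C ((α + β + γ : ℕ) : ℂ) * Mn α β γ := by
  rw [d0M, d1M, d2M]
  rcases α with _|α <;> rcases β with _|β <;> rcases γ with _|γ <;>
    simp [Mn, ww, uu, pow_succ] <;> push_cast <;> ring

lemma lapM (α β γ : ℕ) :
    pderiv 0 (pderiv 0 (Mn α β γ)) + pderiv 1 (pderiv 1 (Mn α β γ))
      + pderiv 2 (pderiv 2 (Mn α β γ)) =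
    4 * C (α:ℂ) * C (β:ℂ) * Mn (α-1) (β-1) γ
      + C (γ:ℂ) * C ((γ-1 : ℕ):ℂ) * Mn α β (γ-1-1) := by
  rw [d0M, d1M, d2M]
  simp only [map_add, map_sub, pderiv_C_mul, mul_sub, d0M, d1M, d2M]
  linear_combination (C (α:ℂ) * C ((α-1:ℕ):ℂ) * Mn (α-1-1) β γ
    - 2 * C (α:ℂ) * C (β:ℂ) * Mn (α-1) (β-1) γ
    + C (β:ℂ) * C ((β-1:ℕ):ℂ) * Mn α (β-1-1) γ) * hI

def OpE (lam cE : ℂ) (B : MvP) : MvP :=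
  C (2 * lam) * pderiv 0 B
    + 2 * (X 0 * pderiv 0 (pderiv 0 B) + X 1 * pderiv 1 (pderiv 0 B)
        + X 2 * pderiv 2 (pderiv 0 B))
    - X 0 * (pderiv 0 (pderiv 0 B) + pderiv 1 (pderiv 1 B) + pderiv 2 (pderiv 2 B))
    + C cE * pderiv 1 B

lemma eulM' (α β γ : ℕ) :
    X 0 * (C (α:ℂ) * Mn (α-1) β γ + C (β:ℂ) * Mn α (β-1) γ)
      + X 1 * (C Complex.I * (C (α:ℂ) * Mn (α-1) β γ - C (β:ℂ) * Mn α (β-1) γ))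
      + X 2 * (C (γ:ℂ) * Mn α β (γ-1)) = C ((α+β+γ : ℕ):ℂ) * Mn α β γ := by
  rw [← d0M, ← d1M, ← d2M]; exact eulM α β γ

lemma OpM (α β γ : ℕ) (lam cE : ℂ) :
    OpE lam cE (Mn α β γ) =
      C (2*lam) * (C (α:ℂ) * Mn (α-1) β γ + C (β:ℂ) * Mn α (β-1) γ)
        + 2 * C (α:ℂ) * C ((α-1+β+γ : ℕ):ℂ) * Mn (α-1) β γ
        + 2 * C (β:ℂ) * C ((α+(β-1)+γ : ℕ):ℂ) * Mn α (β-1) γ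
        - X 0 * (4 * C (α:ℂ) * C (β:ℂ) * Mn (α-1) (β-1) γ
            + C (γ:ℂ) * C ((γ-1 : ℕ):ℂ) * Mn α β (γ-1-1))
        + C cE * C Complex.I * (C (α:ℂ) * Mn (α-1) β γ - C (β:ℂ) * Mn α (β-1) γ) := by
  unfold OpE
  simp only [d0M, d1M, d2M, map_add, map_sub, pderiv_C_mul]
  linear_combination 2 * C (α:ℂ) * (eulM' (α-1) β γ) + 2 * C (β:ℂ) * (eulM' α (β-1) γ)
    + (- X 0 * (C (α:ℂ) * C ((α-1:ℕ):ℂ) * Mn (α-1-1) β γ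
        - 2 * C (α:ℂ) * C (β:ℂ) * Mn (α-1) (β-1) γ
        + C (β:ℂ) * C ((β-1:ℕ):ℂ) * Mn α (β-1-1) γ)) * hI

lemma hwu : ww * uu = X 0 ^ 2 + X 1 ^ 2 := by
  unfold ww uu
  linear_combination (-(X 1 ^ 2) : MvP) * hI

lemma Rpow (b : ℕ) : ((X 0 ^ 2 + X 1 ^ 2 : MvP)) ^ b = ww ^ b * uu ^ b := by
  rw [← hwu, mul_pow]

lemma Dexpr (c : ℂ) (n : ℕ) :
    Polynomial.C c * Polynomial.X ^ n - Polynomial.X * Polynomial.derivative (Polynomial.X ^ n)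
      = Polynomial.C (c - n) * Polynomial.X ^ n := by
  cases n with
  | zero => simp
  | succ n =>
    rw [Polynomial.derivative_X_pow]
    push_cast
    simp only [sub_eq_add_neg, map_add, map_neg, map_natCast, map_one]
    ring

lemma Sop_pow2 (μ : ℂ) (l : ℤ) (n : ℕ) :
    Sop μ l (Polynomial.X ^ (n+2)) =
      Polynomial.C (-((n:ℂ)+2) * ((n:ℂ)+1)) * Polynomial.X ^ n
        + Polynomial.C (((l:ℤ):ℂ) * (((l:ℤ):ℂ) + 2*μ) - ((n:ℂ)+2)*((n:ℂ)+1)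
            - (1+2*μ)*((n:ℂ)+2)) * Polynomial.X ^ (n+2) := by
  unfold Sop
  simp only [Polynomial.derivative_X_pow, Polynomial.derivative_C_mul, Nat.succ_sub_one]
  push_cast
  simp only [sub_eq_add_neg, map_add, map_neg, map_natCast, map_one, map_mul]
  ring

lemma Sop_one (μ : ℂ) (l : ℤ) :
    Sop μ l (Polynomial.X ^ 0) = Polynomial.C (((l:ℤ):ℂ) * (((l:ℤ):ℂ) + 2*μ)) * Polynomial.X ^ 0 := by
  unfold Sop; simp

lemma Sop_X (μ : ℂ) (l : ℤ) :
    Sop μ l (Polynomial.X ^ 1) =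
      Polynomial.C (((l:ℤ):ℂ) * (((l:ℤ):ℂ) + 2*μ) - (1+2*μ)) * Polynomial.X ^ 1 := by
  unfold Sop; simp; ring

lemma Sop_add (μ : ℂ) (l : ℤ) (p q : Polynomial ℂ) :
    Sop μ l (p + q) = Sop μ l p + Sop μ l q := by
  unfold Sop; simp only [map_add]; ring

lemma Sop_smul (μ : ℂ) (l : ℤ) (c : ℂ) (p : Polynomial ℂ) :
    Sop μ l (c • p) = c • Sop μ l p := by
  unfold Sop
  simp only [Polynomial.smul_eq_C_mul, Polynomial.derivative_C_mul, map_add, map_sub, map_neg]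
  ring

lemma Sop_Cmul (μ : ℂ) (l : ℤ) (c : ℂ) (p : Polynomial ℂ) :
    Sop μ l (Polynomial.C c * p) = Polynomial.C c * Sop μ l p := by
  unfold Sop
  simp only [Polynomial.derivative_C_mul]
  ring

lemma OpE_add (lam cE : ℂ) (B1 B2 : MvP) : OpE lam cE (B1 + B2) = OpE lam cE B1 + OpE lam cE B2 := by
  unfold OpE; simp only [map_add]; ring

lemma OpE_smul (lam cE : ℂ) (c : ℂ) (B : MvP) : OpE lam cE (C c * B) = C c * OpE lam cE B := by
  unfold OpE; simp only [pderiv_C_mul]; ring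

lemma OpE_zero (lam cE : ℂ) : OpE lam cE 0 = 0 := by
  unfold OpE; simp

lemma RZW (b n K : ℕ) : ((X 0^2 + X 1^2 : MvP)) ^ b * X 2 ^ n * ww ^ K = Mn (K+b) b n := by
  rw [Rpow]; unfold Mn; rw [pow_add]; ring

lemma Xderiv (n : ℕ) : Polynomial.X * Polynomial.derivative (Polynomial.X ^ n : Polynomial ℂ)
    = Polynomial.C (n:ℂ) * Polynomial.X ^ n := by
  cases n with
  | zero => simp
  | succ n => rw [Polynomial.derivative_X_pow]; push_cast; simp [Nat.succ_sub_one]; ring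

lemma Tmap_X_pow_high' (l : ℤ) (d : ℕ) (hd : l < d) :
    Tmap l (Polynomial.X ^ d : Polynomial ℂ) = 0 := by
  have := Tmap_X_pow_high l d hd 1
  simpa using this

set_option maxHeartbeats 2000000 in
lemma lemII (lam : ℂ) (a : ℕ) (k m : ℤ) (hk : 0 ≤ k) (q : Polynomial ℂ)
    (hq : q ∈ PolEven ((a:ℤ) - k)) :
    ww * OpE lam (2*Complex.I*((k:ℂ) - (m:ℂ))) (Tmap ((a:ℤ)-k) q * ww ^ k.toNat) =
      ww ^ k.toNat *
        (X 0^2 * Tmap ((a:ℤ)-k-2) (Sop (lam-1) ((a:ℤ)-k) q)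
          + X 1^2 * (C (2*((m:ℂ)-(k:ℂ))) *
              (C ((a:ℂ)-(k:ℂ)) * Tmap ((a:ℤ)-k-2) q
                - Tmap ((a:ℤ)-k-2) (Polynomial.X * q.derivative)))
          + X 0 * X 1 * (C Complex.I * Tmap ((a:ℤ)-k-2) (Sop (lam-1) ((a:ℤ)-k) q)
              + C (2*Complex.I*((k:ℂ)-(m:ℂ))) *
                (C ((a:ℂ)-(k:ℂ)) * Tmap ((a:ℤ)-k-2) q
                  - Tmap ((a:ℤ)-k-2) (Polynomial.X * q.derivative)))
          + C (2*(k:ℂ)*(lam+(a:ℂ)-1+(m:ℂ)-(k:ℂ))) * Tmap ((a:ℤ)-k) q) := by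
  induction hq using Submodule.span_induction with
  | zero =>
    simp [Tmap_zero, OpE_zero, Sop, Tmap_Cmul]
  | add x y hx hy ihx ihy =>
    rw [Polynomial.derivative_add, show Polynomial.X * (Polynomial.derivative x
        + Polynomial.derivative y) = Polynomial.X * Polynomial.derivative x
        + Polynomial.X * Polynomial.derivative y from by ring]
    simp only [Sop_add, Tmap_add, add_mul, OpE_add]
    linear_combination ihx + ihy
  | smul c x hx ihx =>
    rw [Polynomial.smul_eq_C_mul, Polynomial.derivative_C_mul, Sop_Cmul,
      show Polynomial.X * (Polynomial.C c * Polynomial.derivative x)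
        = Polynomial.C c * (Polynomial.X * Polynomial.derivative x) from by ring]
    simp only [Tmap_Cmul]
    rw [mul_assoc (C c) (Tmap ((a:ℤ)-k) x) (ww ^ k.toNat), OpE_smul]
    linear_combination (C c : MvP) * ihx
  | mem p hp =>
    obtain ⟨b, hb, rfl⟩ := hp
    obtain ⟨K, hK⟩ : ∃ K : ℕ, k = (K:ℤ) := ⟨k.toNat, by omega⟩
    subst hK
    set n := (((a:ℤ) - (K:ℤ)) - 2*(b:ℤ)).toNat with hn
    have hak : ((a:ℤ) - (K:ℤ)) = ((n + 2*b : ℕ) : ℤ) := by omega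
    have haC : (a:ℂ) = (K:ℂ) + (n:ℂ) + 2*(b:ℂ) := by
      have h2 : (a:ℤ) = (K:ℤ) + ((n + 2*b : ℕ):ℤ) := by omega
      have h3 := congrArg (fun z : ℤ => (z : ℂ)) h2
      push_cast at h3
      linear_combination h3
    rw [hak, haC]
    simp only [Int.toNat_natCast, Int.cast_natCast]
    rw [Tmap_monomial b n, RZW b n K, OpM, Xderiv n]
    simp only [Tmap_Cmul]
    rcases b with _|b
    · -- b = 0
      rw [Tmap_X_pow_high' _ n (by push_cast; omega)]
      rcases K with _|K <;> rcases n with _|_|n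
      · -- K=0 n=0
        rw [Tmap_neg_deg _ (by omega)]; simp
      · -- K=0 n=1
        rw [Tmap_neg_deg _ (by omega)]; simp
      · -- K=0 n≥2
        rw [Sop_pow2, Tmap_add]
        simp only [Tmap_Cmul]
        rw [show (((n+1+1 + 2*0 : ℕ):ℤ) - 2) = ((n + 2*0 : ℕ):ℤ) from by push_cast; ring]
        rw [Tmap_monomial 0 n, Tmap_X_pow_high' _ (n+1+1) (by push_cast; omega)]
        simp only [Nat.add_zero, Nat.zero_add, Nat.add_sub_cancel, Nat.succ_sub_one, Mn, ww, uu]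
        simp only [map_mul, map_sub, map_add, map_ofNat, map_one, map_natCast, map_intCast,
          map_neg]
        push_cast
        ring
      · -- K≥1 n=0
        rw [Tmap_neg_deg _ (by omega)]
        simp only [Nat.add_zero, Nat.zero_add, Nat.add_sub_cancel, Mn, ww, uu]
        simp only [map_mul, map_sub, map_add, map_ofNat, map_one, map_natCast, map_intCast]
        push_cast
        linear_combination (2*((K:MvP)+1-(m:MvP)) * ((K:MvP)+1) *
          (X 0 + C Complex.I * X 1)^(K+1)) * hI
      · -- K≥1 n=1
        rw [Tmap_neg_deg _ (by omega)]
        simp only [Nat.add_zero, Nat.zero_add, Nat.add_sub_cancel, Mn, ww, uu]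
        simp only [map_mul, map_sub, map_add, map_ofNat, map_one, map_natCast, map_intCast]
        push_cast
        linear_combination (2*((K:MvP)+1-(m:MvP)) * ((K:MvP)+1) *
          (X 0 + C Complex.I * X 1)^(K+1) * X 2) * hI
      · -- K≥1 n≥2
        rw [Sop_pow2, Tmap_add]
        simp only [Tmap_Cmul]
        rw [show (((n+1+1 + 2*0 : ℕ):ℤ) - 2) = ((n + 2*0 : ℕ):ℤ) from by push_cast; ring]
        rw [Tmap_monomial 0 n, Tmap_X_pow_high' _ (n+1+1) (by push_cast; omega)]
        simp only [Nat.add_zero, Nat.zero_add, Nat.add_sub_cancel, Nat.succ_sub_one, Mn, ww, uu]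
        simp only [map_mul, map_sub, map_add, map_ofNat, map_one, map_natCast, map_intCast,
          map_neg]
        push_cast
        linear_combination (2*((K:MvP)+1-(m:MvP)) * ((K:MvP)+1) *
          (X 0 + C Complex.I * X 1)^(K+1) * X 2 ^(n+1+1)) * hI
    · -- b ≥ 1
      rw [show (((n + 2*(b+1) : ℕ):ℤ) - 2) = ((n + 2*b : ℕ):ℤ) from by push_cast; ring]
      rcases n with _|_|n
      · -- n = 0
        rw [Sop_one, Tmap_Cmul, Tmap_monomial b 0]
        simp only [show K+(b+1)-1 = K+b from by omega, show (b+1)-1 = b from by omega,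
          show K+(b+1) = K+b+1 from by omega, Rpow, Mn, ww, uu]
        simp only [map_mul, map_sub, map_add, map_ofNat, map_one, map_natCast, map_intCast,
          map_neg]
        push_cast
        linear_combination (2*((K:MvP) - (m:MvP)) *
          (((K:MvP)+(b:MvP)+1) * (X 0 + C Complex.I*X 1)^(K+b) * (X 0 - C Complex.I*X 1)^(b+1)
            - ((b:MvP)+1) * (X 0 + C Complex.I*X 1)^(K+b+1) * (X 0 - C Complex.I*X 1)^b)
          * (X 0 + C Complex.I * X 1)
          + 4*((b:MvP)+1)*((K:MvP)-(m:MvP))*X 1^2*(X 0 + C Complex.I*X 1)^(K+b)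
            * (X 0 - C Complex.I*X 1)^b) * hI
      · -- n = 1
        rw [Sop_X, Tmap_Cmul, Tmap_monomial b 1]
        simp only [show K+(b+1)-1 = K+b from by omega, show (b+1)-1 = b from by omega,
          show K+(b+1) = K+b+1 from by omega, Rpow, Mn, ww, uu]
        simp only [map_mul, map_sub, map_add, map_ofNat, map_one, map_natCast, map_intCast,
          map_neg]
        push_cast
        linear_combination (2*((K:MvP) - (m:MvP)) *
          (((K:MvP)+(b:MvP)+1) * (X 0 + C Complex.I*X 1)^(K+b) * (X 0 - C Complex.I*X 1)^(b+1)
            - ((b:MvP)+1) * (X 0 + C Complex.I*X 1)^(K+b+1) * (X 0 - C Complex.I*X 1)^b)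
          * X 2 * (X 0 + C Complex.I * X 1)
          + 4*((b:MvP)+1)*((K:MvP)-(m:MvP))*X 1^2*X 2*(X 0 + C Complex.I*X 1)^(K+b)
            * (X 0 - C Complex.I*X 1)^b) * hI
      · -- n ≥ 2
        rw [Sop_pow2, Tmap_add]
        simp only [Tmap_Cmul]
        rw [show Tmap (((n+1+1 + 2*b : ℕ):ℤ)) (Polynomial.X ^ n)
              = (X 0^2 + X 1^2)^(b+1) * X 2^n from by
            rw [show ((n+1+1+2*b : ℕ):ℤ) = ((n + 2*(b+1) : ℕ):ℤ) from by push_cast; ring]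
            exact Tmap_monomial (b+1) n]
        rw [Tmap_monomial b (n+1+1)]
        simp only [show K+(b+1)-1 = K+b from by omega, show (b+1)-1 = b from by omega,
          show K+(b+1) = K+b+1 from by omega, Nat.succ_sub_one, Rpow, Mn, ww, uu]
        simp only [map_mul, map_sub, map_add, map_ofNat, map_one, map_natCast, map_intCast,
          map_neg]
        push_cast
        linear_combination (2*((K:MvP) - (m:MvP)) *
          (((K:MvP)+(b:MvP)+1) * (X 0 + C Complex.I*X 1)^(K+b) * (X 0 - C Complex.I*X 1)^(b+1)
            - ((b:MvP)+1) * (X 0 + C Complex.I*X 1)^(K+b+1) * (X 0 - C Complex.I*X 1)^b)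
          * X 2^(n+1+1) * (X 0 + C Complex.I * X 1)
          + 4*((b:MvP)+1)*((K:MvP)-(m:MvP))*X 1^2*X 2^(n+1+1)*(X 0 + C Complex.I*X 1)^(K+b)
            * (X 0 - C Complex.I*X 1)^b) * hI

lemma pd2_Wpow (e : ℕ) : pderiv 2 (ww ^ e : MvP) = 0 := by
  simp [pderiv_pow, pd2_ww]

lemma nbr (l : ℤ) (p : Polynomial ℂ) (e : ℕ) :
    pderiv 2 (Tmap l p * ww ^ e) = Tmap (l-1) p.derivative * ww ^ e := by
  rw [pderiv_mul, pd2_Wpow, Tmap_deriv]; ring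

end Helpers

open MvPolynomial

/-- the explicit formula for `(ζ₁+iζ₂)·M_s(ψ(g))`, `s = k-m+N`. -/
theorem statement5 (lam nu : ℂ) (a N : ℕ) (m : ℤ) (ha : nu - lam = (a : ℂ))
    (hm : (N : ℤ) ≤ m) (g : ℤ → Polynomial ℂ)
    (hg : ∀ k : ℤ, m - N ≤ k → k ≤ m + N → g k ∈ PolEven ((a : ℤ) - k))
    (hg0 : g (m - N - 1) = 0) (hg1 : g (m + N + 1) = 0) :
    ∀ k : ℤ, m - N ≤ k → k ≤ m + N →
      (MvPolynomial.X 0 + MvPolynomial.C Complex.I * MvPolynomial.X 1) *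
          Mop lam N (psiTuple (a : ℤ) N m g) (k - m + N) =
        (MvPolynomial.X 0 + MvPolynomial.C Complex.I * MvPolynomial.X 1) ^ k.toNat *
          (MvPolynomial.X 0 ^ 2 *
              Tmap ((a : ℤ) - k - 2)
                (Sop (lam - 1) ((a : ℤ) - k) (g k) +
                  Polynomial.C ((N : ℂ) - (k : ℂ) + (m : ℂ)) * (g (k + 1)).derivative)
            + MvPolynomial.X 1 ^ 2 *
              Tmap ((a : ℤ) - k - 2)
                (Polynomial.C (2 * ((m : ℂ) - (k : ℂ))) *
                    (Polynomial.C ((a : ℂ) - (k : ℂ)) * g k -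
                      Polynomial.X * (g k).derivative) -
                  Polynomial.C ((N : ℂ) - (k : ℂ) + (m : ℂ)) * (g (k + 1)).derivative)
            + MvPolynomial.X 0 * MvPolynomial.X 1 *
              Tmap ((a : ℤ) - k - 2)
                (Polynomial.C Complex.I * Sop (lam - 1) ((a : ℤ) - k) (g k) +
                  Polynomial.C (2 * Complex.I * ((k : ℂ) - (m : ℂ))) *
                    (Polynomial.C ((a : ℂ) - (k : ℂ)) * g k -
                      Polynomial.X * (g k).derivative) +
                  Polynomial.C (2 * Complex.I * ((N : ℂ) - (k : ℂ) + (m : ℂ))) *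
                    (g (k + 1)).derivative)
            + Tmap ((a : ℤ) - k)
                (Polynomial.C (2 * (k : ℂ) * (lam + (a : ℂ) - 1 + (m : ℂ) - (k : ℂ))) * g k -
                  Polynomial.C ((N : ℂ) + (k : ℂ) - (m : ℂ)) * (g (k - 1)).derivative)) := by
  intro k hk1 hk2
  have hk0 : 0 ≤ k := by omega
  have hpsi : ∀ j : ℤ, m - N - 1 ≤ j → j ≤ m + N + 1 →
      psiTuple (a:ℤ) N m g (j - m + N) = Tmap ((a:ℤ) - j) (g j) * ww ^ j.toNat := by
    intro j h1 h2
    by_cases hj : m - N ≤ j ∧ j ≤ m + N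
    · simp only [psiTuple]
      rw [if_pos (by omega : (0:ℤ) ≤ j - m + N ∧ j - m + (N:ℤ) ≤ 2*N)]
      rw [show j - m + (N:ℤ) + m - N = j from by ring]
      rfl
    · have hj' : j = m - N - 1 ∨ j = m + N + 1 := by omega
      rcases hj' with rfl | rfl
      · simp only [psiTuple]
        rw [if_neg (by omega), hg0, Tmap_zero, zero_mul]
      · simp only [psiTuple]
        rw [if_neg (by omega), hg1, Tmap_zero, zero_mul]
  have hA : ww * pderiv 2 (Tmap ((a:ℤ) - (k-1)) (g (k-1)) * ww ^ (k-1).toNat) =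
      Tmap ((a:ℤ) - k) ((g (k-1)).derivative) * ww ^ k.toNat := by
    rw [nbr]
    rcases eq_or_lt_of_le hk0 with h0 | h0
    · have hg' : g (k-1) = 0 := by rw [show k-1 = m - N - 1 from by omega]; exact hg0
      rw [hg']
      simp [Tmap_zero]
    · rw [show (a:ℤ) - (k-1) - 1 = (a:ℤ) - k from by ring,
        show k.toNat = (k-1).toNat + 1 from by omega, pow_succ]
      ring
  have hC : ww * pderiv 2 (Tmap ((a:ℤ) - (k+1)) (g (k+1)) * ww ^ (k+1).toNat) =
      Tmap ((a:ℤ) - k - 2) ((g (k+1)).derivative) * ww ^ k.toNat * ww ^ 2 := by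
    rw [nbr, show (a:ℤ) - (k+1) - 1 = (a:ℤ) - k - 2 from by ring,
      show (k+1).toNat = k.toNat + 1 from by omega, pow_succ]
    ring
  have hB := lemII lam a k m hk0 (g k) (hg k hk1 hk2)
  simp only [Mop]
  rw [show k - m + (N:ℤ) - 1 = (k-1) - m + N from by ring,
    show k - m + (N:ℤ) + 1 = (k+1) - m + N from by ring,
    hpsi k (by omega) (by omega), hpsi (k-1) (by omega) (by omega),
    hpsi (k+1) (by omega) (by omega)]
  simp only [Tmap_add, Tmap_sub, Tmap_Cmul]
  simp only [OpE, ww] at hB hA hC ⊢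
  simp only [map_mul, map_add, map_sub, map_ofNat, map_one, map_natCast, map_intCast,
    map_neg] at hB hA hC ⊢
  push_cast at hB hA hC ⊢
  linear_combination hB - ((k:MvP) - (m:MvP) + (N:MvP)) * hA
    + ((N:MvP) - (k:MvP) + (m:MvP)) * hC
    + (((N:MvP) - (k:MvP) + (m:MvP)) * X 1^2
        * Tmap ((a:ℤ) - k - 2) ((g (k+1)).derivative) * (X 0 + C Complex.I * X 1) ^ k.toNat)
      * hI

end
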